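/- arXiv:1705.08494 — 2 statements merged into one kernel-verified Lean document; each statement's English description precedes it below -/
import Mathlib

section
/- Under stochastic unbounded delays with constant step size γ > 0 and the stochastic block rule satisfying E‖∇_{i_k} f(x^{k−j(k)})‖₂² = (1/N)·Σ_{i=1}^{N} E‖∇_i f(x^{k−j(k)})‖₂² for all k, one has E‖∇f(x^k)‖₂² ≤ (8NL²/γ²)·E‖Δ^k‖₂² + (12N+2)L²·Σ_{i=0}^{k−1} s_{k−1−i}·E‖Δ^i‖₂² for all k. -/
open MeasureTheory Filter
open scoped BigOperators

/-!
Let `J := j(k)` be the largest delay and `Y := x^(k-J)`. The Lipschitz gradient gives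
`‖∇f(x^k)‖² ≤ 2L²‖x^k - Y‖² + 2‖∇f(Y)‖²`; the block rule turns `E‖∇f(Y)‖²` into
`N E|∇_{i_k} f(Y)|²`; and since the update reads `∇_{i_k} f(x̂^k) = (L/γ)(x^k - x^(k+1))_{i_k}`,
`|∇_{i_k} f(Y)|² ≤ 2L²‖Y - x̂^k‖² + 2(L/γ)²‖Δ^k‖²`.

Every coordinate of `x^k` and of `x̂^k` is taken from an iterate between `k - J` and `k`, so
telescoping and Cauchy–Schwarz bound `‖x^k - Y‖²` and `‖x̂^k - Y‖²` by
`G := J Σ_{k-J ≤ i < k} ‖Δ^i‖² = Σ_{i<k} J 1[J > k-1-i] ‖Δ^i‖²`. For `i < k`, `‖Δ^i‖²` is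
measurable with respect to the history up to step `k`, so the conditional bound on
`P(j(k) = j)` yields `E G ≤ Σ_{i<k} (Σ_{j > k-1-i} j p_j) E‖Δ^i‖² ≤ Σ_{i<k} s_{k-1-i} E‖Δ^i‖²`.
-/

open Finset

def delayWeight (l j : ℕ) : ℝ := if l < j then j else 0

lemma sq_sub_le_mul_sum_sq_sub (x : ℕ → ℝ) {a b : ℕ} (hab : a ≤ b) :
    (x b - x a) ^ 2 ≤ (b - a : ℕ) * ∑ l ∈ Ico a b, (x (l + 1) - x l) ^ 2 := by
  rw [← sum_Ico_sub x hab, ← Nat.card_Ico]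
  exact sq_sum_le_card_mul_sum_sq

lemma norm_sub_sq_le_mul_sum_Ico {ι : Type*} [Fintype ι] (x : ℕ → EuclideanSpace ℝ ι)
    {a n : ℕ} {b : ι → ℕ} (hab : ∀ i, a ≤ b i) (hbn : ∀ i, b i ≤ n)
    {y : EuclideanSpace ℝ ι} (hy : ∀ i, y i = x (b i) i) :
    ‖y - x a‖ ^ 2 ≤ (n - a : ℕ) * ∑ l ∈ Ico a n, ‖x (l + 1) - x l‖ ^ 2 := by
  calc ‖y - x a‖ ^ 2 = ∑ i, (x (b i) i - x a i) ^ 2 := by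
        simp [EuclideanSpace.norm_sq_eq, hy]
    _ ≤ ∑ i, ((b i - a : ℕ) : ℝ) * ∑ l ∈ Ico a (b i), (x (l + 1) i - x l i) ^ 2 :=
        sum_le_sum fun i _ => sq_sub_le_mul_sum_sq_sub (x · i) (hab i)
    _ ≤ ∑ i, ((n - a : ℕ) : ℝ) * ∑ l ∈ Ico a n, (x (l + 1) i - x l i) ^ 2 := by
        gcongr with i <;> exact hbn i
    _ = (n - a : ℕ) * ∑ l ∈ Ico a n, ‖x (l + 1) - x l‖ ^ 2 := by
        simp [EuclideanSpace.norm_sq_eq, ← mul_sum, sum_comm (s := univ)]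

lemma mul_sum_Ico_eq_sum_delayWeight (J k : ℕ) (h : ℕ → ℝ) :
    (J : ℝ) * ∑ l ∈ Ico (k - J) k, h l = ∑ l ∈ range k, delayWeight (k - 1 - l) J * h l := by
  simp only [delayWeight, ite_mul, zero_mul, ← sum_filter, mul_sum]
  congr 1
  ext l
  simp only [mem_Ico, mem_filter, mem_range]
  omega

-- Equals `J * ∑ l ∈ Ico (k - J) k, ‖x (l + 1) - x l‖ ^ 2` when `J ≤ k`; in this form the delay
-- `J` enters only through the weights, which is what the expectation bound needs.
def delayPenalty {E : Type*} [SeminormedAddCommGroup E] (x : ℕ → E) (k J : ℕ) : ℝ :=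
  ∑ l ∈ range k, delayWeight (k - 1 - l) J * ‖x (l + 1) - x l‖ ^ 2

lemma norm_sub_sq_le_delayPenalty {ι : Type*} [Fintype ι] (x : ℕ → EuclideanSpace ℝ ι) {J k : ℕ}
    (hJk : J ≤ k) {b : ι → ℕ} (hb : ∀ i, k - J ≤ b i ∧ b i ≤ k) {y : EuclideanSpace ℝ ι}
    (hy : ∀ i, y i = x (b i) i) :
    ‖y - x (k - J)‖ ^ 2 ≤ delayPenalty x k J := by
  have h := norm_sub_sq_le_mul_sum_Ico x (fun i => (hb i).1) (fun i => (hb i).2) hy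
  rwa [Nat.sub_sub_self hJk, mul_sum_Ico_eq_sum_delayWeight] at h

lemma sum_delayWeight_mul_le {p : ℕ → ℝ} (hp : ∀ j, 0 ≤ p j) {l : ℕ} {s : ℝ}
    (hs : HasSum (fun j : ℕ => if l ≤ j then (j : ℝ) * p j else 0) s) (t : Finset ℕ) :
    ∑ j ∈ t, delayWeight l j * p j ≤ s := by
  have hjp : ∀ j : ℕ, 0 ≤ (j : ℝ) * p j := fun j => mul_nonneg j.cast_nonneg (hp j)
  calc ∑ j ∈ t, delayWeight l j * p j
      ≤ ∑ j ∈ t, if l ≤ j then (j : ℝ) * p j else 0 := by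
        gcongr with j
        unfold delayWeight
        split_ifs <;> first | omega | simp [hjp]
    _ ≤ s := sum_le_hasSum t (fun j _ => by split_ifs <;> simp [hjp]) hs

lemma norm_sq_le_of_norm_sub_le {E F : Type*} [SeminormedAddCommGroup E]
    [SeminormedAddCommGroup F] {g : E → F} {L : ℝ}
    (hg : ∀ y z, ‖g y - g z‖ ≤ L * ‖y - z‖) (x y : E) :
    ‖g x‖ ^ 2 ≤ 2 * L ^ 2 * ‖x - y‖ ^ 2 + 2 * ‖g y‖ ^ 2 := by
  have h1 : ‖g x‖ ≤ ‖g x - g y‖ + ‖g y‖ := norm_le_norm_sub_add _ _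
  have h2 : ‖g x - g y‖ ^ 2 ≤ L ^ 2 * ‖x - y‖ ^ 2 := by
    rw [← mul_pow]
    exact pow_le_pow_left₀ (norm_nonneg _) (hg x y) 2
  nlinarith [norm_nonneg (g x), sq_nonneg (‖g x - g y‖ - ‖g y‖)]

lemma norm_apply_sq_le_of_coordinate_step {E ι : Type*} [SeminormedAddCommGroup E] [Fintype ι]
    {g : E → EuclideanSpace ℝ ι} {L : ℝ} (hg : ∀ y z, ‖g y - g z‖ ≤ L * ‖y - z‖)
    {x x' : EuclideanSpace ℝ ι} {z : E} {i : ι} {c : ℝ} (hc : c ≠ 0)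
    (hstep : x' i = x i - c * g z i) (y : E) :
    ‖g y i‖ ^ 2 ≤ 2 * L ^ 2 * ‖y - z‖ ^ 2 + 2 * c⁻¹ ^ 2 * ‖x' - x‖ ^ 2 := by
  have hgz : g z i = -c⁻¹ * (x' - x) i := by
    rw [PiLp.sub_apply, hstep]
    field_simp
    ring
  have hgz_sq : ‖g z i‖ ^ 2 ≤ c⁻¹ ^ 2 * ‖x' - x‖ ^ 2 := by
    rw [hgz, norm_mul, mul_pow, norm_neg, norm_inv, Real.norm_eq_abs, inv_pow, sq_abs, ← inv_pow]
    gcongr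
    exact PiLp.norm_apply_le _ i
  calc ‖g y i‖ ^ 2 ≤ 2 * L ^ 2 * ‖y - z‖ ^ 2 + 2 * ‖g z i‖ ^ 2 :=
        norm_sq_le_of_norm_sub_le (g := fun y => g y i)
          (fun y z => (PiLp.norm_apply_le (g y - g z) i).trans (hg y z)) y z
    _ ≤ _ := by linarith

lemma comp_nat_mul_eq_sum_indicator {Ω : Type*} {J : Ω → ℕ} {n : ℕ} (hJn : ∀ ω, J ω ≤ n)
    (φ : ℕ → ℝ) (g : Ω → ℝ) :
    (fun ω => φ (J ω) * g ω)
      = fun ω => ∑ j ∈ range (n + 1), {ω | J ω = j}.indicator (fun ω => φ j * g ω) ω := by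
  ext ω
  rw [sum_eq_single_of_mem (J ω) (mem_range.2 (Nat.lt_succ_of_le (hJn ω)))]
  · simp
  · intro j _ hj
    simp [Ne.symm hj]

section Measure

variable {Ω : Type*} {m : MeasurableSpace Ω} [mΩ : MeasurableSpace Ω] {μ : Measure Ω}

lemma measurable_nat_index_apply {β : Type*} [MeasurableSpace β] {F : ℕ → Ω → β}
    (hF : ∀ l, Measurable (F l)) {J : Ω → ℕ} (hJ : Measurable J) :
    Measurable fun ω => F (J ω) ω :=
  (measurable_from_prod_countable_left (f := fun q : Ω × ℕ => F q.2 q.1) hF).comp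
    (measurable_id.prodMk hJ)

lemma integral_le_mul_add_mul_of_le {f g h : Ω → ℝ} {a b : ℝ} (hf : 0 ≤ f)
    (hg : Integrable g μ) (hh : Integrable h μ) (hfgh : ∀ ω, f ω ≤ a * g ω + b * h ω) :
    ∫ ω, f ω ∂μ ≤ a * ∫ ω, g ω ∂μ + b * ∫ ω, h ω ∂μ := by
  rw [← integral_const_mul, ← integral_const_mul, ← integral_add (hg.const_mul a) (hh.const_mul b)]
  exact integral_mono_of_nonneg (ae_of_all _ hf) ((hg.const_mul a).add (hh.const_mul b))
    (ae_of_all _ hfgh)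

lemma integral_norm_sq_eq_sum {ι : Type*} [Fintype ι] {Z : Ω → EuclideanSpace ℝ ι}
    (hZ : AEStronglyMeasurable Z μ) (hZi : Integrable (fun ω => ‖Z ω‖ ^ 2) μ) :
    ∫ ω, ‖Z ω‖ ^ 2 ∂μ = ∑ i, ∫ ω, ‖Z ω i‖ ^ 2 ∂μ := by
  have hcoord : ∀ i, Integrable (fun ω => ‖Z ω i‖ ^ 2) μ := fun i =>
    hZi.mono' (((PiLp.continuous_apply 2 _ i).comp_aestronglyMeasurable hZ).norm.pow 2)
      (ae_of_all _ fun ω => by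
        simpa using pow_le_pow_left₀ (norm_nonneg _) (PiLp.norm_apply_le (Z ω) i) 2)
  simp_rw [EuclideanSpace.norm_sq_eq (Z _)]
  exact integral_finsetSum _ fun i _ => hcoord i

/-- The superlevel sets `{t < g}` are `m`-measurable, so the hypothesis applies to each of them
in the layer-cake formula. -/
lemma setIntegral_le_mul_integral_of_measure_inter_le (hm : m ≤ mΩ) {g : Ω → ℝ} (hg0 : 0 ≤ g)
    (hgm : Measurable[m] g) (hgi : Integrable g μ) {B : Set Ω} {c : ℝ} (hc : 0 ≤ c)
    (hB : ∀ A, MeasurableSet[m] A → μ (A ∩ B) ≤ ENNReal.ofReal c * μ A) :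
    ∫ ω in B, g ω ∂μ ≤ c * ∫ ω, g ω ∂μ := by
  have hgm' : Measurable g := hgm.mono hm le_rfl
  have hlin : ∫⁻ ω in B, ENNReal.ofReal (g ω) ∂μ
      ≤ ENNReal.ofReal c * ∫⁻ ω, ENNReal.ofReal (g ω) ∂μ := by
    rw [lintegral_eq_lintegral_meas_lt _ (ae_of_all _ hg0) hgm'.aemeasurable,
      lintegral_eq_lintegral_meas_lt _ (ae_of_all _ hg0) hgm'.aemeasurable,
      ← lintegral_const_mul' _ _ ENNReal.ofReal_ne_top]
    refine lintegral_mono fun t => ?_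
    rw [Measure.restrict_apply (measurableSet_lt measurable_const hgm')]
    exact hB _ (measurableSet_lt measurable_const hgm)
  rw [integral_eq_lintegral_of_nonneg_ae (ae_of_all _ hg0) hgi.restrict.aestronglyMeasurable,
    integral_eq_lintegral_of_nonneg_ae (ae_of_all _ hg0) hgi.aestronglyMeasurable,
    ← ENNReal.toReal_ofReal hc, ← ENNReal.toReal_mul]
  exact ENNReal.toReal_mono (ENNReal.mul_ne_top ENNReal.ofReal_ne_top hgi.lintegral_lt_top.ne) hlin

variable {J : Ω → ℕ} {n : ℕ} {φ : ℕ → ℝ} {g : Ω → ℝ}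

lemma integrable_comp_nat_mul (hJ : Measurable J) (hJn : ∀ ω, J ω ≤ n) (hgi : Integrable g μ) :
    Integrable (fun ω => φ (J ω) * g ω) μ := by
  rw [comp_nat_mul_eq_sum_indicator hJn φ g]
  exact integrable_finsetSum _ fun j _ =>
    (hgi.const_mul _).indicator (hJ (measurableSet_singleton j))

lemma integral_comp_nat_mul_le (hm : m ≤ mΩ) (hJ : Measurable J) (hJn : ∀ ω, J ω ≤ n)
    {p : ℕ → ℝ} (hp : ∀ j, 0 ≤ p j)
    (hJp : ∀ j A, MeasurableSet[m] A → μ (A ∩ {ω | J ω = j}) ≤ ENNReal.ofReal (p j) * μ A)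
    (hφ : ∀ j, 0 ≤ φ j) (hg0 : 0 ≤ g) (hgm : Measurable[m] g) (hgi : Integrable g μ) :
    ∫ ω, φ (J ω) * g ω ∂μ ≤ (∑ j ∈ range (n + 1), φ j * p j) * ∫ ω, g ω ∂μ := by
  have hmeas : ∀ j, MeasurableSet {ω | J ω = j} := fun j => hJ (measurableSet_singleton j)
  rw [comp_nat_mul_eq_sum_indicator hJn φ g, integral_finsetSum _
    fun j _ => (hgi.const_mul _).indicator (hmeas j), sum_mul]
  gcongr with j
  rw [integral_indicator (hmeas j), integral_const_mul, mul_assoc]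
  exact mul_le_mul_of_nonneg_left
    (setIntegral_le_mul_integral_of_measure_inter_le hm hg0 hgm hgi (hp j) (hJp j)) (hφ j)

variable {E : Type*} [SeminormedAddCommGroup E] {X : ℕ → Ω → E}

lemma integrable_delayPenalty (hJ : Measurable J) (hJn : ∀ ω, J ω ≤ n)
    (hXi : ∀ i, Integrable (fun ω => ‖X (i + 1) ω - X i ω‖ ^ 2) μ) :
    Integrable (fun ω => delayPenalty (X · ω) n (J ω)) μ :=
  integrable_finsetSum _ fun i _ => integrable_comp_nat_mul hJ hJn (hXi i)

lemma integral_delayPenalty_le [MeasurableSpace E] [OpensMeasurableSpace (E × E)]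
    (hm : m ≤ mΩ) (hJ : Measurable J) (hJn : ∀ ω, J ω ≤ n)
    {p : ℕ → ℝ} (hp : ∀ j, 0 ≤ p j)
    (hJp : ∀ j A, MeasurableSet[m] A → μ (A ∩ {ω | J ω = j}) ≤ ENNReal.ofReal (p j) * μ A)
    {s : ℕ → ℝ} (hs : ∀ l, HasSum (fun j : ℕ => if l ≤ j then (j : ℝ) * p j else 0) (s l))
    (hXm : ∀ l ≤ n, Measurable[m] (X l))
    (hXi : ∀ i, Integrable (fun ω => ‖X (i + 1) ω - X i ω‖ ^ 2) μ) :
    ∫ ω, delayPenalty (X · ω) n (J ω) ∂μ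
      ≤ ∑ i ∈ range n, s (n - 1 - i) * ∫ ω, ‖X (i + 1) ω - X i ω‖ ^ 2 ∂μ := by
  unfold delayPenalty
  rw [integral_finsetSum _ fun i _ => integrable_comp_nat_mul hJ hJn (hXi i)]
  gcongr with i hi
  have hΔm : Measurable[m] fun ω => ‖X (i + 1) ω - X i ω‖ ^ 2 :=
    ((continuous_norm.comp continuous_sub).pow 2).measurable.comp
      ((hXm _ (mem_range.1 hi)).prodMk (hXm _ (mem_range.1 hi).le))
  refine (integral_comp_nat_mul_le hm hJ hJn hp hJp (fun j => by unfold delayWeight; positivity)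
    (fun ω => sq_nonneg _) hΔm (hXi i)).trans ?_
  exact mul_le_mul_of_nonneg_right (sum_delayWeight_mul_le hp (hs _) _)
    (integral_nonneg fun ω => sq_nonneg _)

end Measure

section History

variable {Ω β γ : Type*} [MeasurableSpace β] [MeasurableSpace γ]

abbrev history (X : ℕ → Ω → β) (Z : ℕ → Ω → γ) (k : ℕ) : MeasurableSpace Ω :=
  (⨆ l ∈ range (k + 1), MeasurableSpace.comap (X l) inferInstance)
    ⊔ ⨆ l ∈ range (k + 1), MeasurableSpace.comap (Z l) inferInstance

variable {X : ℕ → Ω → β} {Z : ℕ → Ω → γ}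

lemma measurable_history_left {l k : ℕ} (hl : l ≤ k) : Measurable[history X Z k] (X l) :=
  measurable_iff_comap_le.2
    (le_sup_of_le_left (le_iSup₂_of_le l (mem_range.2 (Nat.lt_succ_of_le hl)) le_rfl))

lemma history_le [MeasurableSpace Ω] (hX : ∀ l, Measurable (X l)) (hZ : ∀ l, Measurable (Z l))
    (k : ℕ) : history X Z k ≤ ‹MeasurableSpace Ω› :=
  sup_le (iSup₂_le fun l _ => (hX l).comap_le) (iSup₂_le fun l _ => (hZ l).comap_le)

end History

theorem expected_gradient_bound_unbounded_general
    (N : ℕ) (hN : 0 < N)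
    (f : EuclideanSpace ℝ (Fin N) → ℝ)
    (L : ℝ) (hL : 0 < L)
    (hlip : ∀ y z : EuclideanSpace ℝ (Fin N), ‖gradient f y - gradient f z‖ ≤ L * ‖y - z‖)
    (Ω : Type) [MeasurableSpace Ω] (μ : Measure Ω)
    (X : ℕ → Ω → EuclideanSpace ℝ (Fin N)) (hXm : ∀ k, Measurable (X k))
    (jv : ℕ → Ω → Fin N → ℕ) (hjvm : ∀ k, Measurable (jv k))
    (hjk : ∀ k ω i, jv k ω i ≤ k)
    (xhat : ℕ → Ω → EuclideanSpace ℝ (Fin N))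
    (hxhat : ∀ k ω i, xhat k ω i = X (k - jv k ω i) ω i)
    (ik : ℕ → Ω → Fin N)
    (p : ℕ → ℝ) (hp : ∀ j, 0 ≤ p j)
    (hpbound : ∀ k j : ℕ, ∀ A : Set Ω,
      MeasurableSet[(⨆ l ∈ Finset.range (k+1), MeasurableSpace.comap (X l) inferInstance) ⊔
        (⨆ l ∈ Finset.range (k+1), MeasurableSpace.comap (jv l) inferInstance)] A →
      μ (A ∩ {ω | Finset.univ.sup (jv k ω) = j}) ≤ ENNReal.ofReal (p j) * μ A)
    (s : ℕ → ℝ)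
    (hs : ∀ l : ℕ, HasSum (fun j : ℕ => if l ≤ j then (j : ℝ) * p j else 0) (s l))
    (γ : ℝ) (hγ : 0 < γ)
    (hupd : ∀ k ω, X (k+1) ω (ik k ω) = X k ω (ik k ω) - (γ / L) * gradient f (xhat k ω) (ik k ω))
    (hID2 : ∀ k, Integrable (fun ω => ‖X (k+1) ω - X k ω‖ ^ 2) μ)
    (hblock : ∀ k : ℕ,
      ∫ ω, ‖gradient f (X (k - Finset.univ.sup (jv k ω)) ω) (ik k ω)‖ ^ 2 ∂μ
        = (1 / (N : ℝ)) * ∑ i : Fin N, ∫ ω, ‖gradient f (X (k - Finset.univ.sup (jv k ω)) ω) i‖ ^ 2 ∂μ)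
    (hIgd2 : ∀ k, Integrable (fun ω => ‖gradient f (X (k - Finset.univ.sup (jv k ω)) ω)‖ ^ 2) μ)
    :
    ∀ k : ℕ,
      ∫ ω, ‖gradient f (X k ω)‖ ^ 2 ∂μ
        ≤ (8 * (N : ℝ) * L ^ 2 / γ ^ 2) * ∫ ω, ‖X (k+1) ω - X k ω‖ ^ 2 ∂μ
          + (12 * (N : ℝ) + 2) * L ^ 2 *
              ∑ i ∈ Finset.range k, s (k - 1 - i) * ∫ ω, ‖X (i+1) ω - X i ω‖ ^ 2 ∂μ := by
  intro k
  set J : Ω → ℕ := fun ω => univ.sup (jv k ω)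
  have hJk : ∀ ω, J ω ≤ k := fun ω => Finset.sup_le fun i _ => hjk k ω i
  have hJm : Measurable J := (measurable_of_countable fun v : Fin N → ℕ => univ.sup v).comp (hjvm k)
  set Y : Ω → EuclideanSpace ℝ (Fin N) := fun ω => X (k - J ω) ω
  have hYm : Measurable Y := measurable_nat_index_apply hXm (measurable_const.sub hJm)
  set G : Ω → ℝ := fun ω => delayPenalty (X · ω) k (J ω)
  have hG : Integrable G μ := integrable_delayPenalty hJm hJk hID2
  have hEG : ∫ ω, G ω ∂μ ≤ ∑ i ∈ range k, s (k - 1 - i) * ∫ ω, ‖X (i + 1) ω - X i ω‖ ^ 2 ∂μ :=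
    integral_delayPenalty_le (history_le hXm hjvm k) hJm hJk hp (hpbound k) hs
      (fun _ => measurable_history_left) hID2
  have hXY : ∀ ω, ‖X k ω - Y ω‖ ^ 2 ≤ G ω := fun ω =>
    norm_sub_sq_le_delayPenalty (X · ω) (hJk ω) (fun _ => ⟨Nat.sub_le _ _, le_rfl⟩) fun _ => rfl
  have hxhatY : ∀ ω, ‖xhat k ω - Y ω‖ ^ 2 ≤ G ω := fun ω =>
    norm_sub_sq_le_delayPenalty (X · ω) (hJk ω)
      (fun i => ⟨Nat.sub_le_sub_left (le_sup (mem_univ i)) k, Nat.sub_le _ _⟩) (hxhat k ω)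
  have hgc : Continuous (gradient f) := (LipschitzWith.of_dist_le' (K := L) fun y z => by
    simpa only [dist_eq_norm] using hlip y z).continuous
  have hgrad_X : ∫ ω, ‖gradient f (X k ω)‖ ^ 2 ∂μ
      ≤ 2 * L ^ 2 * ∫ ω, G ω ∂μ + 2 * ∫ ω, ‖gradient f (Y ω)‖ ^ 2 ∂μ :=
    integral_le_mul_add_mul_of_le (fun ω => by positivity) hG (hIgd2 k) fun ω =>
      (norm_sq_le_of_norm_sub_le hlip (X k ω) (Y ω)).trans (by gcongr; exact hXY ω)
  have hgrad_Y : ∫ ω, ‖gradient f (Y ω)‖ ^ 2 ∂μ = N * ∫ ω, ‖gradient f (Y ω) (ik k ω)‖ ^ 2 ∂μ := by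
    rw [integral_norm_sq_eq_sum (Z := fun ω => gradient f (Y ω))
      (hgc.measurable.comp hYm).aestronglyMeasurable (hIgd2 k), hblock k]
    field_simp
    rfl
  have hgrad_Y_coord : ∫ ω, ‖gradient f (Y ω) (ik k ω)‖ ^ 2 ∂μ
      ≤ 2 * L ^ 2 * ∫ ω, G ω ∂μ + 2 * (L / γ) ^ 2 * ∫ ω, ‖X (k + 1) ω - X k ω‖ ^ 2 ∂μ :=
    integral_le_mul_add_mul_of_le (fun ω => by positivity) hG (hID2 k) fun ω => by
      have h := norm_apply_sq_le_of_coordinate_step hlip (by positivity) (hupd k ω) (Y ω)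
      rw [inv_div, norm_sub_rev] at h
      exact h.trans (by gcongr; exact hxhatY ω)
  have hG0 : 0 ≤ ∫ ω, G ω ∂μ := integral_nonneg fun ω => (sq_nonneg _).trans (hXY ω)
  have hD0 : 0 ≤ N * (L / γ) ^ 2 * ∫ ω, ‖X (k + 1) ω - X k ω‖ ^ 2 ∂μ := by positivity
  have hGS := mul_le_mul_of_nonneg_left hEG (sq_nonneg L)
  have hNGS := mul_le_mul_of_nonneg_left hGS N.cast_nonneg
  have hNG0 : 0 ≤ N * (L ^ 2 * ∫ ω, G ω ∂μ) := by positivity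
  have hN3 := mul_le_mul_of_nonneg_left hgrad_Y_coord N.cast_nonneg
  rw [hgrad_Y] at hgrad_X
  rw [mul_div_assoc, ← div_pow]
  linarith

theorem expected_gradient_bound_unbounded
    (N : ℕ) (hN : 0 < N)
    (f : EuclideanSpace ℝ (Fin N) → ℝ)
    (L : ℝ) (hL : 0 < L)
    (hdiff : Differentiable ℝ f)
    (hlip : ∀ y z : EuclideanSpace ℝ (Fin N), ‖gradient f y - gradient f z‖ ≤ L * ‖y - z‖)
    (fmin : ℝ) (hfmin : ∀ y, fmin ≤ f y)
    (Ω : Type) [MeasurableSpace Ω] (μ : Measure Ω) [IsProbabilityMeasure μ]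
    (X : ℕ → Ω → EuclideanSpace ℝ (Fin N)) (hXm : ∀ k, Measurable (X k))
    (jv : ℕ → Ω → Fin N → ℕ) (hjvm : ∀ k, Measurable (jv k))
    (hjk : ∀ k ω i, jv k ω i ≤ k)
    (xhat : ℕ → Ω → EuclideanSpace ℝ (Fin N))
    (hxhat : ∀ k ω i, xhat k ω i = X (k - jv k ω i) ω i)
    (ik : ℕ → Ω → Fin N) (hikm : ∀ k, Measurable (ik k))
    (p : ℕ → ℝ) (hp : ∀ j, 0 ≤ p j)
    (hpbound : ∀ k j : ℕ, ∀ A : Set Ω,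
      MeasurableSet[(⨆ l ∈ Finset.range (k+1), MeasurableSpace.comap (X l) inferInstance) ⊔
        (⨆ l ∈ Finset.range (k+1), MeasurableSpace.comap (jv l) inferInstance)] A →
      μ (A ∩ {ω | Finset.univ.sup (jv k ω) = j}) ≤ ENNReal.ofReal (p j) * μ A)
    (s cf : ℕ → ℝ)
    (hs : ∀ l : ℕ, HasSum (fun j : ℕ => if l ≤ j then (j : ℝ) * p j else 0) (s l))
    (hcf : ∀ i : ℕ, HasSum (fun l : ℕ => if i ≤ l then s l else 0) (cf i))
    (γ : ℝ) (hγ : 0 < γ)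
    (hupd : ∀ k ω, X (k+1) ω (ik k ω) = X k ω (ik k ω) - (γ / L) * gradient f (xhat k ω) (ik k ω))
    (hfix : ∀ k ω i, i ≠ ik k ω → X (k+1) ω i = X k ω i)
    (hIf : ∀ k, Integrable (fun ω => f (X k ω)) μ)
    (hID2 : ∀ k, Integrable (fun ω => ‖X (k+1) ω - X k ω‖ ^ 2) μ)
    (hId2 : ∀ k, Integrable (fun ω => ‖X k ω - xhat k ω‖ ^ 2) μ)
    (hIg2 : ∀ k, Integrable (fun ω => ‖gradient f (X k ω)‖ ^ 2) μ)
    (hblock : ∀ k : ℕ,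
      ∫ ω, ‖gradient f (X (k - Finset.univ.sup (jv k ω)) ω) (ik k ω)‖ ^ 2 ∂μ
        = (1 / (N : ℝ)) * ∑ i : Fin N, ∫ ω, ‖gradient f (X (k - Finset.univ.sup (jv k ω)) ω) i‖ ^ 2 ∂μ)
    (hIgd2 : ∀ k, Integrable (fun ω => ‖gradient f (X (k - Finset.univ.sup (jv k ω)) ω)‖ ^ 2) μ)
    (hIgd2c : ∀ k, Integrable (fun ω => ‖gradient f (X (k - Finset.univ.sup (jv k ω)) ω) (ik k ω)‖ ^ 2) μ)
    :
    ∀ k : ℕ,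
      ∫ ω, ‖gradient f (X k ω)‖ ^ 2 ∂μ
        ≤ (8 * (N : ℝ) * L ^ 2 / γ ^ 2) * ∫ ω, ‖X (k+1) ω - X k ω‖ ^ 2 ∂μ
          + (12 * (N : ℝ) + 2) * L ^ 2 *
              ∑ i ∈ Finset.range k, s (k - 1 - i) * ∫ ω, ‖X (i+1) ω - X i ω‖ ^ 2 ∂μ :=
  expected_gradient_bound_unbounded_general N hN f L hL hlip Ω μ X hXm jv hjvm hjk xhat hxhat ik p
    hp hpbound s hs γ hγ hupd hID2 hblock hIgd2
end

section
/- Under deterministic unbounded delays with delay-adaptive step size γ_k = c/D_{j(k)}, 0 < c < 1, and the essentially cyclically semi-unbounded delay (ECSD) block rule, for every T ≥ B one has lim_{(k∈Q_T)→∞} ‖∇f(x^k)‖₂ = 0, where Q_T := {k ∈ ℕ : j(k) ≤ T}. -/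
/-!
Each asynchronous coordinate step is a gradient step evaluated at a stale point. By the descent
lemma it decreases `f` by `(L / γ_k - L / 2)‖Δ^k‖²`, up to an error `L ‖Δ^k‖ ‖x^k - x̂^k‖`, and
`‖x^k - x̂^k‖` is at most the sum of the last `j(k)` steps. Splitting each product
`‖Δ^k‖ ‖Δ^{k-i}‖` by AM-GM with weight `ε_i` costs `Σ_{i ≤ j(k)} 1/(2ε_i)` in front of `‖Δ^k‖²`,
which the delay-adaptive step size `γ_k = c / D_{j(k)}` pays for, while the terms `ε_i ‖Δ^{k-i}‖²`
add up over all `k` to at most `κ₁ ‖Δ^m‖²` for each `m`. Since `f` is bounded below, `Σ ‖Δ^k‖²`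
converges, so `Δ^k → 0`.

Under the ECSD rule every coordinate `i` is updated, with delay at most `B`, at some step `K` within
`N'` steps of `k`. There `|∇_i f(x̂^K)| = (L / γ_K)‖Δ^K‖`, and `x^k`, `x^K`, `x̂^K` lie within a
window of `2N' + B` steps of each other, so `|∇_i f(x^k)|` is bounded by a constant times the
sum of `‖Δ^m‖` over that window. Hence `∇f(x^k) → 0` along the whole sequence, in particular
along `Q_T`.
-/

open Filter Topology Finset

section Descent

variable {E : Type*} [NormedAddCommGroup E] [InnerProductSpace ℝ E] [CompleteSpace E]

theorem descent_lemma {f : E → ℝ} {L : ℝ} (hf : Differentiable ℝ f)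
    (hlip : ∀ y z, ‖gradient f y - gradient f z‖ ≤ L * ‖y - z‖) (a v : E) :
    f (a + v) ≤ f a + inner ℝ (gradient f a) v + L / 2 * ‖v‖ ^ 2 := by
  set g : ℝ → ℝ := fun t => f (a + t • v) - t * inner ℝ (gradient f a) v - t ^ 2 * (L / 2 * ‖v‖ ^ 2)
  have hg : ∀ t, HasDerivAt g
      (inner ℝ (gradient f (a + t • v) - gradient f a) v - t * (L * ‖v‖ ^ 2)) t := by
    intro t
    have hline : HasDerivAt (fun t : ℝ => a + t • v) v t := by
      simpa using ((hasDerivAt_id t).smul_const v).const_add a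
    have hfline := (hf (a + t • v)).hasGradientAt.hasFDerivAt.comp_hasDerivAt t hline
    have := ((hfline.sub ((hasDerivAt_id t).mul_const (inner ℝ (gradient f a) v))).sub
      ((hasDerivAt_pow 2 t).mul_const (L / 2 * ‖v‖ ^ 2)))
    refine this.congr_deriv ?_
    simp only [InnerProductSpace.toDual_apply_apply, inner_sub_left]
    ring
  have hanti : AntitoneOn g (Set.Icc 0 1) := by
    refine antitoneOn_of_hasDerivWithinAt_nonpos (convex_Icc 0 1)
      (fun t _ => (hg t).continuousAt.continuousWithinAt) (fun t _ => (hg t).hasDerivWithinAt) ?_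
    intro t ht
    rw [interior_Icc] at ht
    have hlin : inner ℝ (gradient f (a + t • v) - gradient f a) v ≤ t * (L * ‖v‖ ^ 2) :=
      calc inner ℝ (gradient f (a + t • v) - gradient f a) v
          ≤ ‖gradient f (a + t • v) - gradient f a‖ * ‖v‖ := real_inner_le_norm _ _
        _ ≤ L * ‖t • v‖ * ‖v‖ := by
          gcongr
          simpa using hlip (a + t • v) a
        _ = t * (L * ‖v‖ ^ 2) := by
          rw [norm_smul, Real.norm_of_nonneg ht.1.le]; ring
    linarith
  have := hanti (by simp) (by simp) zero_le_one
  simp only [g, zero_smul, one_smul, add_zero, zero_mul, one_mul, one_pow, sub_zero,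
    ne_eq, OfNat.ofNat_ne_zero, not_false_eq_true, zero_pow] at this
  linarith

end Descent

section Euclidean

variable {ι : Type*}

theorem sub_eq_single_of_coordinate_step [DecidableEq ι] {a b g : EuclideanSpace ℝ ι} {i : ι}
    {η : ℝ} (hi : b i = a i - η * g i) (hj : ∀ j, j ≠ i → b j = a j) :
    b - a = EuclideanSpace.single i (-(η * g i)) := by
  ext j
  rcases eq_or_ne j i with rfl | hji
  · simp [hi]
  · simp [hj j hji, hji]

variable [Fintype ι]

theorem EuclideanSpace.norm_le_norm_of_forall_abs_le {v w : EuclideanSpace ℝ ι}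
    (h : ∀ i, |v i| ≤ |w i|) : ‖v‖ ≤ ‖w‖ := by
  simp only [EuclideanSpace.norm_eq, Real.norm_eq_abs]
  exact Real.sqrt_le_sqrt (sum_le_sum fun i _ => pow_le_pow_left₀ (abs_nonneg _) (h i) 2)

theorem norm_sub_le_sum_Ico_of_delayed {x : ℕ → EuclideanSpace ℝ ι} {y : EuclideanSpace ℝ ι}
    {j : ι → ℕ} {k J : ℕ} (hj : ∀ i, j i ≤ J) (hy : ∀ i, y i = x (k - j i) i) :
    ‖x k - y‖ ≤ ∑ m ∈ Ico (k - J) k, ‖x (m + 1) - x m‖ := by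
  classical
  -- `z m` is the part of the step `x (m + 1) - x m` that the delayed read `y` has not seen.
  let z : ℕ → EuclideanSpace ℝ ι := fun m =>
    WithLp.toLp 2 fun i => if k - j i ≤ m then (x (m + 1) - x m) i else 0
  have hsum : x k - y = ∑ m ∈ Ico (k - J) k, z m := by
    ext i
    have hfilter : (Ico (k - J) k).filter (fun m => k - j i ≤ m) = Ico (k - j i) k := by
      ext m; simp only [mem_filter, mem_Ico]; have := hj i; omega
    simp only [z, WithLp.ofLp_sum, Finset.sum_apply, ← sum_filter, hfilter, PiLp.sub_apply,
      hy, sum_Ico_sub (fun m => x m i) (Nat.sub_le k (j i))]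
  rw [hsum]
  refine (norm_sum_le _ _).trans (sum_le_sum fun m _ => ?_)
  refine EuclideanSpace.norm_le_norm_of_forall_abs_le fun i => ?_
  simp only [z]
  split_ifs <;> simp

theorem norm_sub_of_coordinate_step {a b g : EuclideanSpace ℝ ι} {i : ι} {η : ℝ} (hη : 0 ≤ η)
    (hi : b i = a i - η * g i) (hj : ∀ j, j ≠ i → b j = a j) : ‖b - a‖ = η * |g i| := by
  classical
  rw [sub_eq_single_of_coordinate_step hi hj, PiLp.norm_single, Real.norm_eq_abs, abs_neg,
    abs_mul, abs_of_nonneg hη]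

theorem abs_apply_le_of_coordinate_step {a b g : EuclideanSpace ℝ ι} {i : ι} {η G : ℝ}
    (hη : 0 < η) (hG : 1 / η ≤ G) (hi : b i = a i - η * g i) (hj : ∀ j, j ≠ i → b j = a j) :
    |g i| ≤ G * ‖b - a‖ := by
  rw [norm_sub_of_coordinate_step hη.le hi hj, ← mul_assoc]
  refine le_mul_of_one_le_left (abs_nonneg _) ?_
  calc 1 = 1 / η * η := by field_simp
    _ ≤ G * η := by gcongr

theorem descent_of_coordinate_step {f : EuclideanSpace ℝ ι → ℝ} {L η : ℝ} (hη : 0 < η)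
    (hf : Differentiable ℝ f) (hlip : ∀ y z, ‖gradient f y - gradient f z‖ ≤ L * ‖y - z‖)
    {a b a' : EuclideanSpace ℝ ι} {i : ι} (hi : b i = a i - η * gradient f a' i)
    (hj : ∀ j, j ≠ i → b j = a j) :
    f b ≤ f a - (1 / η - L / 2) * ‖b - a‖ ^ 2 + L * ‖b - a‖ * ‖a - a'‖ := by
  classical
  set d := -(η * gradient f a' i)
  have hnorm : ‖b - a‖ = |d| := by
    rw [sub_eq_single_of_coordinate_step hi hj, PiLp.norm_single, Real.norm_eq_abs]
  have hinner : inner ℝ (gradient f a) (b - a) = d * gradient f a i := by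
    rw [sub_eq_single_of_coordinate_step hi hj, EuclideanSpace.inner_single_right]
    simp [d]
  have hdelayed : d * gradient f a' i = -(1 / η) * d ^ 2 := by
    simp only [d]; field_simp
  have herror : d * (gradient f a - gradient f a') i ≤ |d| * (L * ‖a - a'‖) :=
    calc d * (gradient f a - gradient f a') i ≤ |d| * |(gradient f a - gradient f a') i| := by
          rw [← abs_mul]; exact le_abs_self _
      _ ≤ |d| * (L * ‖a - a'‖) := by
          gcongr
          exact (PiLp.norm_apply_le _ i).trans (hlip a a')
  have hsplit :
      d * gradient f a i = d * gradient f a' i + d * (gradient f a - gradient f a') i := by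
    simp only [PiLp.sub_apply]; ring
  have hdesc := descent_lemma hf hlip a (b - a)
  rw [add_sub_cancel, hinner] at hdesc
  rw [hnorm, sq_abs] at hdesc ⊢
  linarith

end Euclidean

theorem mul_sum_le_sum_weighted_sq {α : Type*} {s : Finset α} {r : ℝ} {b w : α → ℝ}
    (hw : ∀ m ∈ s, 0 < w m) :
    r * ∑ m ∈ s, b m ≤ ∑ m ∈ s, (w m / 2 * b m ^ 2 + r ^ 2 / (2 * w m)) := by
  rw [mul_sum]
  refine sum_le_sum fun m hm => ?_
  have hwm := hw m hm
  have key : 0 ≤ (w m * b m - r) ^ 2 / (2 * w m) := by positivity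
  have expand : (w m * b m - r) ^ 2 / (2 * w m) =
      w m / 2 * b m ^ 2 + r ^ 2 / (2 * w m) - r * b m := by
    field_simp; ring
  linarith

theorem sum_Ico_sub_le_sum_Icc {g : ℕ → ℝ} (hg : ∀ i, 0 ≤ g i) (k J : ℕ) :
    ∑ m ∈ Ico (k - J) k, g (k - m) ≤ ∑ i ∈ Icc 1 J, g i := by
  have hinj : Set.InjOn (k - ·) (Ico (k - J) k : Set ℕ) := by
    intro m hm m' hm' h; simp only [coe_Ico, Set.mem_Ico] at hm hm' h; omega
  rw [← sum_image hinj]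
  refine sum_le_sum_of_subset_of_nonneg ?_ fun i _ _ => hg i
  intro i hi; simp only [mem_image, mem_Ico, mem_Icc] at hi ⊢; omega

theorem sum_range_sum_Ico_mul_le_mul_sum {a w : ℕ → ℝ} {J : ℕ → ℕ} {κ : ℝ} (ha : ∀ m, 0 ≤ a m)
    (hw : ∀ i, 0 ≤ w i) (hwκ : ∀ n, ∑ i ∈ range n, w (i + 1) ≤ κ) (K : ℕ) :
    ∑ k ∈ range K, ∑ m ∈ Ico (k - J k) k, w (k - m) * a m ≤ κ * ∑ m ∈ range K, a m := by
  calc ∑ k ∈ range K, ∑ m ∈ Ico (k - J k) k, w (k - m) * a m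
      ≤ ∑ k ∈ Ico 0 K, ∑ m ∈ Ico 0 k, w (k - m) * a m := by
        rw [← Nat.Ico_zero_eq_range]
        refine sum_le_sum fun k _ => sum_le_sum_of_subset_of_nonneg (Ico_subset_Ico_left
          (Nat.zero_le _)) fun m _ _ => mul_nonneg (hw _) (ha m)
    _ = ∑ m ∈ range K, (∑ i ∈ range (K - (m + 1)), w (i + 1)) * a m := by
        rw [← sum_Ico_Ico_comm', Nat.Ico_zero_eq_range]
        refine sum_congr rfl fun m _ => ?_
        rw [← sum_mul, sum_Ico_eq_sum_range]
        congr 2 with i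
        congr 1; omega
    _ ≤ κ * ∑ m ∈ range K, a m := by
        rw [mul_sum]
        exact sum_le_sum fun m _ => mul_le_mul_of_nonneg_right (hwκ _) (ha m)

theorem summable_of_descent_with_delayed_errors {u a w : ℕ → ℝ} {J : ℕ → ℕ} {lo ρ θ κ : ℝ}
    (hρ : 0 < ρ) (hθ : 0 < θ) (ha : ∀ m, 0 ≤ a m) (hw : ∀ i, 0 ≤ w i)
    (hwκ : ∀ n, ∑ i ∈ range n, w (i + 1) ≤ κ) (hu : ∀ k, lo ≤ u k)
    (hstep : ∀ k, u (k + 1) ≤ u k - ρ * ((θ + κ) * a k) +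
      ρ * ∑ m ∈ Ico (k - J k) k, w (k - m) * a m) :
    Summable a := by
  have htelescope : ∀ K, u K + ρ * ((θ + κ) * ∑ k ∈ range K, a k) ≤
      u 0 + ρ * ∑ k ∈ range K, ∑ m ∈ Ico (k - J k) k, w (k - m) * a m := by
    intro K
    induction K with
    | zero => simp
    | succ K ih =>
      simp only [sum_range_succ]
      linarith [hstep K]
  refine summable_of_sum_range_le (c := (u 0 - lo) / (ρ * θ)) ha fun K => ?_
  rw [le_div_iff₀ (mul_pos hρ hθ)]
  have := sum_range_sum_Ico_mul_le_mul_sum ha hw hwκ (J := J) K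
  nlinarith [htelescope K, hu K]

theorem tendsto_sum_Ico_sub_add {g : ℕ → ℝ} (hg : Tendsto g atTop (𝓝 0)) (p q : ℕ) :
    Tendsto (fun k => ∑ m ∈ Ico (k - p) (k + q), g m) atTop (𝓝 0) := by
  have hshift : ∀ i, Tendsto (fun k => g (k - p + i)) atTop (𝓝 0) := fun i =>
    hg.comp ((tendsto_add_atTop_nat i).comp (tendsto_sub_atTop_nat p))
  have hsum := tendsto_finsetSum (range (p + q)) fun i _ => hshift i
  rw [sum_const_zero] at hsum
  refine hsum.congr' ?_
  filter_upwards [eventually_ge_atTop p] with k hk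
  rw [sum_Ico_eq_sum_range, show k + q - (k - p) = p + q by omega]

theorem norm_sub_le_sum_Ico_of_mem {E : Type*} [SeminormedAddCommGroup E] (x : ℕ → E)
    {a b lo hi : ℕ} (ha : a ∈ Icc lo hi) (hb : b ∈ Icc lo hi) :
    ‖x a - x b‖ ≤ ∑ m ∈ Ico lo hi, ‖x (m + 1) - x m‖ := by
  wlog hab : a ≤ b generalizing a b
  · rw [norm_sub_rev]; exact this hb ha (le_of_not_ge hab)
  rw [mem_Icc] at ha hb
  calc ‖x a - x b‖ = dist (x a) (x b) := (dist_eq_norm _ _).symm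
    _ ≤ ∑ m ∈ Ico a b, dist (x m) (x (m + 1)) := dist_le_Ico_sum_dist x hab
    _ ≤ ∑ m ∈ Ico lo hi, ‖x (m + 1) - x m‖ := by
      simp_rw [dist_comm (x _) (x (_ + 1)), dist_eq_norm]
      exact sum_le_sum_of_subset_of_nonneg (Ico_subset_Ico ha.1 hb.2) fun _ _ _ => norm_nonneg _

theorem EuclideanSpace.tendsto_norm_zero_of_forall_apply {ι α : Type*} [Fintype ι] {l : Filter α}
    {v : α → EuclideanSpace ℝ ι} (h : ∀ i, Tendsto (fun t => v t i) l (𝓝 0)) :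
    Tendsto (fun t => ‖v t‖) l (𝓝 0) := by
  have hcoord : Tendsto (fun t => WithLp.ofLp (v t)) l (𝓝 0) := tendsto_pi_nhds.2 h
  have := ((PiLp.continuous_toLp 2 fun _ : ι => ℝ).tendsto 0).comp hcoord
  simpa using this.norm

theorem lt_add_and_lt_add_of_mem_block {k K n : ℕ} (h₁ : k / n * n ≤ K)
    (h₂ : K < (k / n + 1) * n) : K < k + n ∧ k < K + n := by
  have hn : 0 < n := Nat.pos_of_ne_zero fun h => by simp [h] at h₂
  have := Nat.div_mul_le_self k n
  have := Nat.lt_div_mul_add (a := k) hn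
  rw [add_one_mul] at h₂
  omega

theorem sum_range_succ_le_of_hasSum {ε : ℕ → ℝ} {κ : ℝ} (hε : ∀ n, 0 ≤ ε n)
    (h : HasSum (fun j => if 1 ≤ j then ε j else 0) κ) (n : ℕ) :
    ∑ i ∈ range n, ε (i + 1) ≤ κ := by
  refine le_of_eq_of_le ?_ (sum_le_hasSum (range (n + 1)) (fun j _ => ?_) h)
  · simp [sum_range_succ']
  · split_ifs <;> simp [hε j]

-- `D_j` of the step size `γ_k = c / D_{j(k)}`, with `κ = κ₁`.
noncomputable def delayDenominator (κ : ℝ) (ε : ℕ → ℝ) (j : ℕ) : ℝ :=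
  1 / 2 + κ / 2 + ∑ i ∈ Icc 1 j, 1 / (2 * ε i)

section DelayDenominator

variable {κ : ℝ} {ε : ℕ → ℝ}

theorem le_delayDenominator (hε : ∀ n, 0 < ε n) (j : ℕ) : 1 / 2 + κ / 2 ≤ delayDenominator κ ε j :=
  le_add_of_nonneg_right (sum_nonneg fun i _ => by have := hε i; positivity)

theorem delayDenominator_pos (hκ : 0 ≤ κ) (hε : ∀ n, 0 < ε n) (j : ℕ) :
    0 < delayDenominator κ ε j :=
  lt_of_lt_of_le (by positivity) (le_delayDenominator hε j)

theorem delayDenominator_mono (hε : ∀ n, 0 < ε n) : Monotone (delayDenominator κ ε) :=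
  fun a b hab => add_le_add_right (sum_le_sum_of_subset_of_nonneg (Icc_subset_Icc_right hab)
    fun i _ _ => by have := hε i; positivity) _

theorem one_div_div_delayDenominator_div_le {c L : ℝ} (hc : 0 ≤ c) (hL : 0 ≤ L)
    (hε : ∀ n, 0 < ε n) {j B : ℕ} (h : j ≤ B) :
    1 / (c / delayDenominator κ ε j / L) ≤ L * delayDenominator κ ε B / c := by
  rw [one_div_div, div_div_eq_mul_div]
  gcongr
  exact delayDenominator_mono hε h

end DelayDenominator

theorem mul_norm_sub_le_of_delayed {ι : Type*} [Fintype ι] {ε : ℕ → ℝ}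
    {x : ℕ → EuclideanSpace ℝ ι} {x' : EuclideanSpace ℝ ι} {delay : ι → ℕ} {k J : ℕ} {r : ℝ}
    (hr : 0 ≤ r) (hε : ∀ n, 0 < ε n) (hdelay : ∀ j, delay j ≤ J)
    (hx' : ∀ j, x' j = x (k - delay j) j) :
    r * ‖x k - x'‖ ≤ 1 / 2 * ∑ m ∈ Ico (k - J) k, ε (k - m) * ‖x (m + 1) - x m‖ ^ 2 +
      (∑ n ∈ Icc 1 J, 1 / (2 * ε n)) * r ^ 2 :=
  calc r * ‖x k - x'‖ ≤ r * ∑ m ∈ Ico (k - J) k, ‖x (m + 1) - x m‖ :=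
        mul_le_mul_of_nonneg_left (norm_sub_le_sum_Ico_of_delayed hdelay hx') hr
    _ ≤ ∑ m ∈ Ico (k - J) k, (ε (k - m) / 2 * ‖x (m + 1) - x m‖ ^ 2 + r ^ 2 / (2 * ε (k - m))) :=
        mul_sum_le_sum_weighted_sq fun m _ => hε _
    _ = 1 / 2 * ∑ m ∈ Ico (k - J) k, ε (k - m) * ‖x (m + 1) - x m‖ ^ 2 +
          (∑ m ∈ Ico (k - J) k, 1 / (2 * ε (k - m))) * r ^ 2 := by
        rw [sum_add_distrib, mul_sum, sum_mul]
        congr 1 <;> refine sum_congr rfl fun m _ => ?_ <;> ring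
    _ ≤ 1 / 2 * ∑ m ∈ Ico (k - J) k, ε (k - m) * ‖x (m + 1) - x m‖ ^ 2 +
          (∑ n ∈ Icc 1 J, 1 / (2 * ε n)) * r ^ 2 := by
        gcongr
        exact sum_Ico_sub_le_sum_Icc (g := fun n => 1 / (2 * ε n))
          (fun n => by have := hε n; positivity) k J

theorem descent_of_delayed_coordinate_step {ι : Type*} [Fintype ι] {f : EuclideanSpace ℝ ι → ℝ}
    {L c κ : ℝ} {ε : ℕ → ℝ} {x : ℕ → EuclideanSpace ℝ ι} {x' : EuclideanSpace ℝ ι}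
    {delay : ι → ℕ} {i : ι} {k J : ℕ} (hL : 0 < L) (hc : 0 < c) (hc1 : c < 1) (hκ : 0 ≤ κ)
    (hε : ∀ n, 0 < ε n) (hf : Differentiable ℝ f)
    (hlip : ∀ y z, ‖gradient f y - gradient f z‖ ≤ L * ‖y - z‖)
    (hdelay : ∀ j, delay j ≤ J) (hx' : ∀ j, x' j = x (k - delay j) j)
    (hi : x (k + 1) i = x k i - c / delayDenominator κ ε J / L * gradient f x' i)
    (hj : ∀ j, j ≠ i → x (k + 1) j = x k j) :
    f (x (k + 1)) ≤ f (x k) - L / 2 * (((1 / c - 1) * (1 + κ) + κ) * ‖x (k + 1) - x k‖ ^ 2) +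
      L / 2 * ∑ m ∈ Ico (k - J) k, ε (k - m) * ‖x (m + 1) - x m‖ ^ 2 := by
  set D := delayDenominator κ ε J with hD
  set S := ∑ n ∈ Icc 1 J, 1 / (2 * ε n)
  have hDpos : 0 < D := delayDenominator_pos hκ hε J
  have hstep := descent_of_coordinate_step (by positivity : 0 < c / D / L) hf hlip hi hj
  rw [show 1 / (c / D / L) = L * D / c by field_simp] at hstep
  have hcross := mul_le_mul_of_nonneg_left
    (mul_norm_sub_le_of_delayed (norm_nonneg (x (k + 1) - x k)) hε hdelay hx') hL.le
  have hcoef : L / 2 * ((1 / c - 1) * (1 + κ) + κ) ≤ L * D / c - L / 2 - L * S := by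
    have : (1 - c) * (1 + κ) ≤ (1 - c) * (2 * D) :=
      mul_le_mul_of_nonneg_left (by linarith [le_delayDenominator (κ := κ) hε J]) (by linarith)
    rw [hD, delayDenominator] at this ⊢
    field_simp
    linarith
  have := mul_le_mul_of_nonneg_right hcoef (sq_nonneg ‖x (k + 1) - x k‖)
  linarith

theorem abs_gradient_apply_le_of_near_step {ι : Type*} [Fintype ι] {f : EuclideanSpace ℝ ι → ℝ}
    {L G : ℝ} (hL : 0 ≤ L) (hG : 0 ≤ G) (hlip : ∀ y z, ‖gradient f y - gradient f z‖ ≤ L * ‖y - z‖)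
    {x : ℕ → EuclideanSpace ℝ ι} {x' : EuclideanSpace ℝ ι} {delay : ι → ℕ} {i : ι}
    {k K B n : ℕ} (hdelay : ∀ j, delay j ≤ B) (hx' : ∀ j, x' j = x (K - delay j) j)
    (hgrad : |gradient f x' i| ≤ G * ‖x (K + 1) - x K‖) (hKk : K < k + n) (hkK : k < K + n) :
    |gradient f (x k) i| ≤ (2 * L + G) * ∑ m ∈ Ico (k - (n + B)) (k + n), ‖x (m + 1) - x m‖ := by
  set S := ∑ m ∈ Ico (k - (n + B)) (k + n), ‖x (m + 1) - x m‖
  have hlo : k - (n + B) ≤ K - B := by omega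
  have hk : k ∈ Icc (k - (n + B)) (k + n) := mem_Icc.2 ⟨Nat.sub_le _ _, Nat.le_add_right _ _⟩
  have hK' : K ∈ Icc (k - (n + B)) (k + n) := mem_Icc.2 ⟨hlo.trans (Nat.sub_le K B), hKk.le⟩
  have hxkK : ‖x k - x K‖ ≤ S := norm_sub_le_sum_Ico_of_mem x hk hK'
  have hxKx' : ‖x K - x'‖ ≤ S :=
    (norm_sub_le_sum_Ico_of_delayed hdelay hx').trans <| sum_le_sum_of_subset_of_nonneg
      (Ico_subset_Ico hlo hKk.le) fun _ _ _ => norm_nonneg _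
  have hstep : ‖x (K + 1) - x K‖ ≤ S :=
    norm_sub_le_sum_Ico_of_mem x (mem_Icc.2 ⟨(mem_Icc.1 hK').1.trans K.le_succ, hKk⟩) hK'
  have hlipi : ∀ y z, |gradient f y i - gradient f z i| ≤ L * ‖y - z‖ := fun y z =>
    (PiLp.norm_apply_le (gradient f y - gradient f z) i).trans (hlip y z)
  calc |gradient f (x k) i|
      ≤ |gradient f (x k) i - gradient f (x K) i| + |gradient f (x K) i - gradient f x' i| +
          |gradient f x' i| := by
        simpa only [sub_add_sub_cancel, sub_add_cancel] using abs_add_three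
          (gradient f (x k) i - gradient f (x K) i) (gradient f (x K) i - gradient f x' i)
          (gradient f x' i)
    _ ≤ L * S + L * S + G * S := by
        gcongr
        · exact (hlipi _ _).trans (by gcongr)
        · exact (hlipi _ _).trans (by gcongr)
        · exact hgrad.trans (by gcongr)
    _ = (2 * L + G) * S := by ring

theorem deterministic_unbounded_ECSD_convergence_general
    (N : ℕ)
    (f : EuclideanSpace ℝ (Fin N) → ℝ)
    (L : ℝ) (hL : 0 < L)
    (hdiff : Differentiable ℝ f)
    (hlip : ∀ y z : EuclideanSpace ℝ (Fin N), ‖gradient f y - gradient f z‖ ≤ L * ‖y - z‖)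
    (fmin : ℝ) (hfmin : ∀ y, fmin ≤ f y)
    (x : ℕ → EuclideanSpace ℝ (Fin N))
    (ik : ℕ → Fin N)
    (jv : ℕ → Fin N → ℕ)
    (xhat : ℕ → EuclideanSpace ℝ (Fin N))
    (hxhat : ∀ k i, xhat k i = x (k - jv k i) i)
    (εs : ℕ → ℝ) (hεs : ∀ i, 0 < εs i)
    (κ : ℕ → ℝ) (hκ : ∀ i : ℕ, HasSum (fun j : ℕ => if i ≤ j then εs j else 0) (κ i))
    (Dd : ℕ → ℝ) (hDd : ∀ m : ℕ, Dd m = 1 / 2 + κ 1 / 2 + ∑ i ∈ Finset.Icc 1 m, 1 / (2 * εs i))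
    (c : ℝ) (hc : 0 < c) (hc1 : c < 1)
    (γ : ℕ → ℝ) (hγ : ∀ k, γ k = c / Dd (Finset.univ.sup (jv k)))
    (hupd : ∀ k, x (k+1) (ik k) = x k (ik k) - (γ k / L) * gradient f (xhat k) (ik k))
    (hfix : ∀ k i, i ≠ ik k → x (k+1) i = x k i)
    (N' B : ℕ)
    (hECSD : ∀ t : ℕ, ∀ i : Fin N, ∃ k : ℕ, t * N' ≤ k ∧ k < (t + 1) * N' ∧ ik k = i ∧
      Finset.univ.sup (jv k) ≤ B) :
    ∀ T : ℕ, B ≤ T →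
      Tendsto (fun k => ‖gradient f (x k)‖)
        (atTop ⊓ Filter.principal {k | Finset.univ.sup (jv k) ≤ T}) (nhds 0) := by
  intro T _
  obtain rfl : Dd = delayDenominator (κ 1) εs := funext hDd
  obtain rfl : γ = fun k => c / delayDenominator (κ 1) εs (univ.sup (jv k)) := funext hγ
  set J : ℕ → ℕ := fun k => univ.sup (jv k)
  set r : ℕ → ℝ := fun m => ‖x (m + 1) - x m‖
  set G := L * delayDenominator (κ 1) εs B / c
  have hjJ : ∀ k i, jv k i ≤ J k := fun k i => le_sup (mem_univ i)
  have hεκ := sum_range_succ_le_of_hasSum (fun n => (hεs n).le) (hκ 1)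
  have hκ0 : 0 ≤ κ 1 := by simpa using hεκ 0
  have hsummable : Summable fun k => r k ^ 2 :=
    summable_of_descent_with_delayed_errors (u := fun k => f (x k)) (by positivity)
      (mul_pos (sub_pos.2 (one_lt_one_div hc hc1)) (by linarith : 0 < 1 + κ 1))
      (fun _ => sq_nonneg _) (fun n => (hεs n).le) hεκ (fun k => hfmin (x k)) fun k =>
        descent_of_delayed_coordinate_step hL hc hc1 hκ0 hεs hdiff hlip (hjJ k) (hxhat k)
          (hupd k) (hfix k)
  have hr : Tendsto r atTop (𝓝 0) := by
    simpa [r, Real.sqrt_sq (norm_nonneg _)] using hsummable.tendsto_atTop_zero.sqrt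
  have hcoord : ∀ k i,
      |gradient f (x k) i| ≤ (2 * L + G) * ∑ m ∈ Ico (k - (N' + B)) (k + N'), r m := by
    intro k i
    obtain ⟨K, hK₁, hK₂, rfl, hKB⟩ := hECSD (k / N') i
    obtain ⟨hKk, hkK⟩ := lt_add_and_lt_add_of_mem_block hK₁ hK₂
    exact abs_gradient_apply_le_of_near_step hL.le
      (div_nonneg (mul_nonneg hL.le (delayDenominator_pos hκ0 hεs B).le) hc.le) hlip
      (fun j => (hjJ K j).trans hKB) (hxhat K) (abs_apply_le_of_coordinate_step
        (div_pos (div_pos hc (delayDenominator_pos hκ0 hεs _)) hL)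
        (one_div_div_delayDenominator_div_le hc.le hL.le hεs hKB) (hupd K) (hfix K)) hKk hkK
  have hwindow :
      Tendsto (fun k => (2 * L + G) * ∑ m ∈ Ico (k - (N' + B)) (k + N'), r m) atTop (𝓝 0) := by
    simpa using (tendsto_sum_Ico_sub_add hr (N' + B) N').const_mul (2 * L + G)
  exact (EuclideanSpace.tendsto_norm_zero_of_forall_apply fun i => squeeze_zero_norm
    (fun k => (Real.norm_eq_abs _).trans_le (hcoord k i)) hwindow).mono_left inf_le_left

theorem deterministic_unbounded_ECSD_convergence
    (N : ℕ) (hN : 0 < N)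
    (f : EuclideanSpace ℝ (Fin N) → ℝ)
    (L : ℝ) (hL : 0 < L)
    (hdiff : Differentiable ℝ f)
    (hlip : ∀ y z : EuclideanSpace ℝ (Fin N), ‖gradient f y - gradient f z‖ ≤ L * ‖y - z‖)
    (fmin : ℝ) (hfmin : ∀ y, fmin ≤ f y)
    (x : ℕ → EuclideanSpace ℝ (Fin N))
    (ik : ℕ → Fin N)
    (jv : ℕ → Fin N → ℕ)
    (hjk : ∀ k i, jv k i ≤ k)
    (xhat : ℕ → EuclideanSpace ℝ (Fin N))
    (hxhat : ∀ k i, xhat k i = x (k - jv k i) i)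
    (εs : ℕ → ℝ) (hεs : ∀ i, 0 < εs i)
    (κ : ℕ → ℝ) (hκ : ∀ i : ℕ, HasSum (fun j : ℕ => if i ≤ j then εs j else 0) (κ i))
    (Dd : ℕ → ℝ) (hDd : ∀ m : ℕ, Dd m = 1 / 2 + κ 1 / 2 + ∑ i ∈ Finset.Icc 1 m, 1 / (2 * εs i))
    (c : ℝ) (hc : 0 < c) (hc1 : c < 1)
    (γ : ℕ → ℝ) (hγ : ∀ k, γ k = c / Dd (Finset.univ.sup (jv k)))
    (hliminf : ∃ T0 : ℕ, ∃ᶠ k in atTop, Finset.univ.sup (jv k) ≤ T0)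
    (hupd : ∀ k, x (k+1) (ik k) = x k (ik k) - (γ k / L) * gradient f (xhat k) (ik k))
    (hfix : ∀ k i, i ≠ ik k → x (k+1) i = x k i)
    (N' B : ℕ) (hNN' : N ≤ N')
    (hECSD : ∀ t : ℕ, ∀ i : Fin N, ∃ k : ℕ, t * N' ≤ k ∧ k < (t + 1) * N' ∧ ik k = i ∧
      Finset.univ.sup (jv k) ≤ B) :
    ∀ T : ℕ, B ≤ T →
      Tendsto (fun k => ‖gradient f (x k)‖)
        (atTop ⊓ Filter.principal {k | Finset.univ.sup (jv k) ≤ T}) (nhds 0) :=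
  deterministic_unbounded_ECSD_convergence_general N f L hL hdiff hlip fmin hfmin x ik jv xhat hxhat
    εs hεs κ hκ Dd hDd c hc hc1 γ hγ hupd hfix N' B hECSD
end
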